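/- (Anisotropic Sobolev inequality) There is a constant C > 0 such that for all f ∈ C_c^∞(ℝ³), ‖f‖_{L⁶(ℝ³)} ≤ C ‖∇_h f‖_{L²(ℝ³)}^{2/3} ‖∂₃ f‖_{L²(ℝ³)}^{1/3}, where ∇_h = (∂₁, ∂₂) denotes the horizontal gradient. -/

import Mathlib

open MeasureTheory Set
open scoped ENNReal

/-- The `i`-th coordinate partial derivative of a function on `ℝ³`. -/
noncomputable def pd (i : Fin 3) (f : EuclideanSpace ℝ (Fin 3) → ℝ)
    (x : EuclideanSpace ℝ (Fin 3)) : ℝ :=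
  fderiv ℝ f x (EuclideanSpace.single i 1)

namespace AnisoAux

abbrev E3 := EuclideanSpace ℝ (Fin 3)

variable {f : E3 → ℝ}

noncomputable def lE := WithLp.linearEquiv 2 ℝ (Fin 3 → ℝ)

/-- diagonal scaling as a linear map -/
noncomputable def sclL (c : Fin 3 → ℝ) : E3 →ₗ[ℝ] E3 :=
  lE.symm.toLinearMap ∘ₗ (LinearMap.pi (fun i => c i • LinearMap.proj i)) ∘ₗ lE.toLinearMap

lemma sclL_apply (c : Fin 3 → ℝ) (x : E3) (i : Fin 3) : sclL c x i = c i * x i := rfl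

lemma sclL_det (c : Fin 3 → ℝ) : LinearMap.det (sclL c) = ∏ i, c i := by
  rw [show sclL c = (lE.symm : (Fin 3 → ℝ) →ₗ[ℝ] E3) ∘ₗ
      (LinearMap.pi (fun i => c i • LinearMap.proj i)) ∘ₗ (lE.symm.symm : E3 →ₗ[ℝ] (Fin 3 → ℝ))
      from rfl, LinearMap.det_conj]
  have h2 : LinearMap.toMatrix (Pi.basisFun ℝ (Fin 3)) (Pi.basisFun ℝ (Fin 3))
      (LinearMap.pi (fun i => c i • LinearMap.proj i)) = Matrix.diagonal c := by
    ext i j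
    simp [LinearMap.toMatrix_apply, Matrix.diagonal, Pi.single_apply, eq_comm]
  rw [← LinearMap.det_toMatrix (Pi.basisFun ℝ (Fin 3)), h2, Matrix.det_diagonal]


lemma pd_continuous {f : E3 → ℝ} (hf : ContDiff ℝ (⊤ : ℕ∞) f) (i : Fin 3) : Continuous (pd i f) := by
  have h1 : Continuous (fderiv ℝ f) := hf.continuous_fderiv (by simp)
  exact (ContinuousLinearMap.apply ℝ ℝ (EuclideanSpace.single i 1)).continuous.comp h1

lemma pd_hcs {f : E3 → ℝ} (h2 : HasCompactSupport f) (i : Fin 3) :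
    HasCompactSupport (pd i f) := h2.fderiv_apply ℝ (EuclideanSpace.single i 1)

lemma pd_ne_top {f : E3 → ℝ} (hf : ContDiff ℝ (⊤ : ℕ∞) f) (h2 : HasCompactSupport f) (i : Fin 3) :
    eLpNorm (pd i f) 2 volume ≠ ⊤ :=
  ((pd_continuous hf i).memLp_of_hasCompactSupport (μ := volume) (pd_hcs h2 i)).eLpNorm_ne_top

noncomputable def grad (f : E3 → ℝ) (x : E3) : E3 :=
  (WithLp.linearEquiv 2 ℝ (Fin 3 → ℝ)).symm (fun i => pd i f x)

lemma grad_apply (f : E3 → ℝ) (x : E3) (i : Fin 3) : grad f x i = pd i f x := rfl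

lemma fderiv_eq_inner {f : E3 → ℝ} (hf : ContDiff ℝ (⊤ : ℕ∞) f) (x y : E3) :
    fderiv ℝ f x y = inner ℝ (grad f x) y := by
  have hb := (EuclideanSpace.basisFun (Fin 3) ℝ).toBasis.sum_repr y
  rw [PiLp.inner_apply]
  conv_lhs => rw [← hb]
  rw [map_sum]
  congr 1
  ext i
  simp [OrthonormalBasis.coe_toBasis_repr_apply, EuclideanSpace.basisFun_repr,
    EuclideanSpace.basisFun_apply, grad_apply, pd, RCLike.inner_apply]

lemma opNorm_fderiv_le {f : E3 → ℝ} (hf : ContDiff ℝ (⊤ : ℕ∞) f) (x : E3) :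
    ‖fderiv ℝ f x‖ ≤ ‖grad f x‖ := by
  refine ContinuousLinearMap.opNorm_le_bound _ (norm_nonneg _) fun y => ?_
  rw [fderiv_eq_inner hf]
  calc ‖(inner ℝ (grad f x) y : ℝ)‖ = |inner ℝ (grad f x) y| := rfl
  _ ≤ ‖grad f x‖ * ‖y‖ := abs_real_inner_le_norm _ _


lemma aux_pow2 {α : Type*} [NormedAddCommGroup α] (v : α) :
    (‖v‖₊ : ℝ≥0∞) ^ (2:ℝ) = ENNReal.ofReal (‖v‖ ^ 2) := by
  rw [← enorm_eq_nnnorm, ← ofReal_norm,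
    ENNReal.ofReal_rpow_of_nonneg (norm_nonneg _) (by norm_num : (0:ℝ) ≤ 2), Real.rpow_two]

lemma aux_pow2' (g : ℝ) : (‖g‖₊ : ℝ≥0∞) ^ (2:ℝ) = ENNReal.ofReal (g ^ 2) := by
  rw [aux_pow2, Real.norm_eq_abs, sq_abs]

lemma sq_norm_grad (hf : ContDiff ℝ (⊤ : ℕ∞) f) (x : E3) :
    (‖grad f x‖₊ : ℝ≥0∞) ^ (2:ℝ) = ∑ i : Fin 3, (‖pd i f x‖₊ : ℝ≥0∞) ^ (2:ℝ) := by
  have h2 : ‖grad f x‖ ^ 2 = ∑ i : Fin 3, pd i f x ^ 2 := by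
    rw [EuclideanSpace.norm_eq, Real.sq_sqrt (by positivity)]
    simp [grad, WithLp.linearEquiv]
  rw [aux_pow2, h2, ENNReal.ofReal_sum_of_nonneg (fun i _ => sq_nonneg _)]
  exact Finset.sum_congr rfl fun i _ => (aux_pow2' _).symm

lemma eLpNorm_grad_eq (hf : ContDiff ℝ (⊤ : ℕ∞) f) :
    eLpNorm (grad f) 2 volume
      = (∑ i : Fin 3, eLpNorm (pd i f) 2 volume ^ (2:ℝ)) ^ ((1:ℝ)/2) := by
  rw [eLpNorm_eq_lintegral_rpow_enorm_toReal two_ne_zero ENNReal.ofNat_ne_top,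
    show (2:ℝ≥0∞).toReal = (2:ℝ) by simp]
  congr 1
  calc ∫⁻ x, (‖grad f x‖₊ : ℝ≥0∞) ^ (2:ℝ) ∂volume
        = ∫⁻ x, ∑ i : Fin 3, (‖pd i f x‖₊ : ℝ≥0∞) ^ (2:ℝ) ∂volume := by
          exact lintegral_congr fun x => sq_norm_grad hf x
      _ = ∑ i : Fin 3, ∫⁻ x, (‖pd i f x‖₊ : ℝ≥0∞) ^ (2:ℝ) ∂volume := by
          refine lintegral_finset_sum _ fun i _ => ?_
          exact ((pd_continuous hf i).measurable.nnnorm.coe_nnreal_ennreal).pow_const _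
      _ = ∑ i : Fin 3, eLpNorm (pd i f) 2 volume ^ (2:ℝ) := by
          refine Finset.sum_congr rfl fun i _ => ?_
          rw [eLpNorm_eq_lintegral_rpow_enorm_toReal two_ne_zero ENNReal.ofNat_ne_top, ← ENNReal.rpow_mul]
          norm_num
          rfl

lemma step1 (hf : ContDiff ℝ (⊤ : ℕ∞) f) (h2 : HasCompactSupport f) :
    eLpNorm f 6 volume ≤
      (eLpNormLESNormFDerivOfEqInnerConst (volume : Measure E3) 2 : ℝ≥0∞) *
      (∑ i : Fin 3, eLpNorm (pd i f) 2 volume ^ (2:ℝ)) ^ ((1:ℝ)/2) := by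
  have h0 := eLpNorm_le_eLpNorm_fderiv_of_eq_inner (F' := ℝ) (μ := (volume : Measure E3))
    (hf.of_le (by simp)) h2 (p := 2) (p' := 6) (by norm_num)
    (by simp [finrank_euclideanSpace]) (by norm_num [finrank_euclideanSpace])
  have h1 : eLpNorm (fderiv ℝ f) 2 (volume : Measure E3) ≤ eLpNorm (grad f) 2 volume :=
    eLpNorm_mono fun x => by simpa using opNorm_fderiv_le hf x
  calc eLpNorm f 6 volume ≤ _ * eLpNorm (fderiv ℝ f) 2 volume := by exact_mod_cast h0
    _ ≤ _ * eLpNorm (grad f) 2 volume := by gcongr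
    _ = _ := by rw [eLpNorm_grad_eq hf]


/-- the coefficient vector scaling the third coordinate by `lam` -/
def cv (lam : ℝ) : Fin 3 → ℝ := fun i => if i = 2 then lam else 1

lemma cv_prod (lam : ℝ) : ∏ i, cv lam i = lam := by
  simp [cv, Fin.prod_univ_three]

/-- the scaling map as a continuous linear map -/
noncomputable def scl (lam : ℝ) : E3 →L[ℝ] E3 :=
  LinearMap.toContinuousLinearMap (sclL (cv lam))

lemma scl_comp (lam : ℝ) (hlam : lam ≠ 0) (x : E3) : scl lam⁻¹ (scl lam x) = x := by
  apply lE.injective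
  funext i
  show (cv lam⁻¹) i * ((cv lam) i * x i) = x i
  by_cases h : i = 2 <;> simp [cv, h, inv_mul_cancel₀ hlam, ← mul_assoc]

lemma scl_single (lam : ℝ) (i : Fin 3) :
    scl lam (EuclideanSpace.single i 1) = cv lam i • EuclideanSpace.single i 1 := by
  apply lE.injective
  funext j
  show cv lam j * (EuclideanSpace.single i (1:ℝ)) j = cv lam i * (EuclideanSpace.single i (1:ℝ)) j
  rcases eq_or_ne j i with rfl | h
  · rfl
  · simp [EuclideanSpace.single_apply, h]

lemma hcs_comp {f : E3 → ℝ} (h2 : HasCompactSupport f) (lam : ℝ) (hlam : lam ≠ 0) :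
    HasCompactSupport (f ∘ scl lam) := by
  rw [hasCompactSupport_def] at h2 ⊢
  have hsub : Function.support (f ∘ scl lam) ⊆ scl lam⁻¹ '' tsupport f := by
    intro x hx
    refine ⟨scl lam x, subset_tsupport f hx, scl_comp lam hlam x⟩
  exact IsCompact.of_isClosed_subset (h2.image (scl lam⁻¹).continuous) isClosed_closure
    ((closure_minimal hsub (h2.image (scl lam⁻¹).continuous).isClosed))

lemma map_scl (lam : ℝ) (hlam : 0 < lam) :
    (volume : Measure E3).map (scl lam) = ENNReal.ofReal lam⁻¹ • volume := by
  have h := Measure.map_linearMap_addHaar_eq_smul_addHaar (volume : Measure E3)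
    (f := sclL (cv lam)) (by rw [sclL_det, cv_prod]; exact hlam.ne')
  rw [sclL_det, cv_prod, abs_of_pos (by positivity)] at h
  exact h

lemma eLpNorm_comp_scl {h : E3 → ℝ} (hh : Continuous h) (p : ℝ≥0∞) (hp : p ≠ ∞)
    (lam : ℝ) (hlam : 0 < lam) :
    eLpNorm (h ∘ scl lam) p volume
      = ENNReal.ofReal lam⁻¹ ^ (1/p).toReal * eLpNorm h p volume := by
  rw [← eLpNorm_map_measure hh.aestronglyMeasurable (scl lam).continuous.aemeasurable,
    map_scl lam hlam, eLpNorm_smul_measure_of_ne_top hp]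
  rfl

lemma pd_comp_scl {f : E3 → ℝ} (hf : ContDiff ℝ (⊤ : ℕ∞) f) (lam : ℝ) (i : Fin 3) :
    pd i (f ∘ scl lam) = fun x => cv lam i • pd i f (scl lam x) := by
  funext x
  have hd : fderiv ℝ (f ∘ scl lam) x = (fderiv ℝ f (scl lam x)).comp (scl lam) := by
    rw [fderiv_comp x ((hf.differentiable (by simp)) _)
      (scl lam).differentiableAt, (scl lam).fderiv]
  rw [pd, hd]
  show fderiv ℝ f (scl lam x) (scl lam (EuclideanSpace.single i 1)) = _
  rw [scl_single, ContinuousLinearMap.map_smul]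
  rfl


lemma eq_zero_of_pd_eq_zero {f : E3 → ℝ} (hf : ContDiff ℝ (⊤ : ℕ∞) f) (h2 : HasCompactSupport f)
    (i : Fin 3) (hz : ∀ x, pd i f x = 0) : f = 0 := by
  funext x
  set e : E3 := EuclideanSpace.single i 1 with he
  have hline : ∀ t : ℝ, f (x + t • e) = f x := by
    have hdiff : Differentiable ℝ (fun t : ℝ => f (x + t • e)) :=
      (hf.differentiable (by simp)).comp ((differentiable_id.smul_const e).const_add x)
    have hderiv : ∀ t, deriv (fun t : ℝ => f (x + t • e)) t = 0 := by
      intro t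
      have h1 : HasDerivAt (fun t : ℝ => x + t • e) e t := by
        simpa using ((hasDerivAt_id t).smul_const e).const_add x
      have h2' := ((hf.differentiable (by simp)) (x + t • e)).hasFDerivAt.comp_hasDerivAt t h1
      have h2'' : HasDerivAt (fun t : ℝ => f (x + t • e)) (fderiv ℝ f (x + t • e) e) t := h2'
      rw [h2''.deriv]
      exact hz _
    intro t
    have := is_const_of_deriv_eq_zero hdiff hderiv t 0
    simpa using this
  obtain ⟨R, hR⟩ := h2.isCompact.isBounded.exists_norm_le
  have ht : ¬ (x + (R + ‖x‖ + 1) • e ∈ tsupport f) := by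
    intro hmem
    have h3 := hR _ hmem
    have hRx : (0:ℝ) ≤ R := le_trans (norm_nonneg _) (hR _ hmem)
    have h4 : ‖(R + ‖x‖ + 1) • e‖ - ‖x‖ ≤ ‖x + (R + ‖x‖ + 1) • e‖ := by
      have := norm_add_le (-x) (x + (R + ‖x‖ + 1) • e)
      simp only [← add_assoc, neg_add_cancel, zero_add, norm_neg] at this
      linarith
    rw [norm_smul, he, EuclideanSpace.norm_single, norm_one,
      Real.norm_eq_abs, abs_of_pos (by positivity), mul_one] at h4
    linarith
  have := hline (R + ‖x‖ + 1)
  rw [image_eq_zero_of_notMem_tsupport ht] at this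
  simp [this.symm]


lemma scaled (hf : ContDiff ℝ (⊤ : ℕ∞) f) (h2 : HasCompactSupport f) (lam : ℝ) (hlam : 0 < lam) :
    eLpNorm f 6 volume ≤
      (eLpNormLESNormFDerivOfEqInnerConst (volume : Measure E3) 2 : ℝ≥0∞) *
      ENNReal.ofReal (lam ^ ((1:ℝ)/6)) *
      (ENNReal.ofReal lam⁻¹ *
          (eLpNorm (pd 0 f) 2 volume ^ (2:ℝ) + eLpNorm (pd 1 f) 2 volume ^ (2:ℝ)) +
        ENNReal.ofReal lam * eLpNorm (pd 2 f) 2 volume ^ (2:ℝ)) ^ ((1:ℝ)/2) := by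
  set C0 := (eLpNormLESNormFDerivOfEqInnerConst (volume : Measure E3) 2 : ℝ≥0∞)
  set A : Fin 3 → ℝ≥0∞ := fun i => eLpNorm (pd i f) 2 volume with hA
  have e6 : ((1:ℝ≥0∞)/6).toReal = ((1:ℝ)/6) := by rw [ENNReal.toReal_div]; norm_num
  have e2 : ((1:ℝ≥0∞)/2).toReal = ((1:ℝ)/2) := by rw [ENNReal.toReal_div]; norm_num
  have hg : ContDiff ℝ (⊤ : ℕ∞) (f ∘ scl lam) := hf.comp (scl lam).contDiff
  have h2g : HasCompactSupport (f ∘ scl lam) := hcs_comp h2 lam hlam.ne'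
  have hstep := step1 hg h2g
  -- rewrite LHS of hstep
  rw [eLpNorm_comp_scl hf.continuous 6 (by norm_num) lam hlam] at hstep
  -- rewrite the partial derivative norms
  have hpd : ∀ i : Fin 3, eLpNorm (pd i (f ∘ scl lam)) 2 volume ^ (2:ℝ)
      = (‖cv lam i‖₊ : ℝ≥0∞) ^ (2:ℝ) * ENNReal.ofReal lam⁻¹ * A i ^ (2:ℝ) := by
    intro i
    have h1 : pd i (f ∘ scl lam) = cv lam i • (pd i f ∘ scl lam) := by
      rw [pd_comp_scl hf lam i]; rfl
    rw [h1, eLpNorm_const_smul,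
      eLpNorm_comp_scl (pd_continuous hf i) 2 (by norm_num) lam hlam, e2]
    show ((‖cv lam i‖₊ : ℝ≥0∞) * (ENNReal.ofReal lam⁻¹ ^ ((1:ℝ)/2) * A i)) ^ (2:ℝ) = _
    rw [ENNReal.mul_rpow_of_nonneg _ _ (by norm_num : (0:ℝ) ≤ 2),
      ENNReal.mul_rpow_of_nonneg _ _ (by norm_num : (0:ℝ) ≤ 2),
      ← ENNReal.rpow_mul, show ((1:ℝ)/2 * 2) = 1 by norm_num, ENNReal.rpow_one]
    ring
  rw [Fin.sum_univ_three, hpd 0, hpd 1, hpd 2] at hstep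
  have hcv0 : (‖cv lam 0‖₊ : ℝ≥0∞) ^ (2:ℝ) = 1 := by simp [cv]
  have hcv1 : (‖cv lam 1‖₊ : ℝ≥0∞) ^ (2:ℝ) = 1 := by simp [cv]
  have hcv2 : (‖cv lam 2‖₊ : ℝ≥0∞) ^ (2:ℝ) * ENNReal.ofReal lam⁻¹ = ENNReal.ofReal lam := by
    have : (‖cv lam 2‖₊ : ℝ≥0∞) = ENNReal.ofReal lam := by
      rw [show cv lam 2 = lam from rfl, ← Real.enorm_eq_ofReal hlam.le]; rfl
    rw [this, ENNReal.ofReal_rpow_of_nonneg hlam.le (by norm_num : (0:ℝ) ≤ 2),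
      ← ENNReal.ofReal_mul (by positivity)]
    congr 1
    rw [Real.rpow_two]
    field_simp
  rw [hcv0, hcv1, hcv2] at hstep
  -- multiply both sides by (ofReal lam) ^ (1/6)
  have key : ENNReal.ofReal (lam ^ ((1:ℝ)/6)) * (ENNReal.ofReal lam⁻¹ ^ ((1:ℝ)/6) * eLpNorm f 6 volume)
      = eLpNorm f 6 volume := by
    rw [← mul_assoc, ← ENNReal.ofReal_rpow_of_nonneg hlam.le (by norm_num : (0:ℝ) ≤ 1/6),
      ← ENNReal.mul_rpow_of_nonneg _ _ (by norm_num : (0:ℝ) ≤ 1/6),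
      ← ENNReal.ofReal_mul hlam.le, mul_inv_cancel₀ hlam.ne']
    simp
  calc eLpNorm f 6 volume
      = ENNReal.ofReal (lam ^ ((1:ℝ)/6)) * (ENNReal.ofReal lam⁻¹ ^ ((1:ℝ)/6) * eLpNorm f 6 volume) := key.symm
    _ ≤ ENNReal.ofReal (lam ^ ((1:ℝ)/6)) * (C0 *
          (ENNReal.ofReal lam⁻¹ * (A 0 ^ (2:ℝ) + A 1 ^ (2:ℝ)) +
            ENNReal.ofReal lam * A 2 ^ (2:ℝ)) ^ ((1:ℝ)/2)) := by
        refine mul_le_mul_right ?_ _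
        calc ENNReal.ofReal lam⁻¹ ^ ((1:ℝ)/6) * eLpNorm f 6 volume
            = ENNReal.ofReal lam⁻¹ ^ ((1:ℝ≥0∞)/6).toReal * eLpNorm f 6 volume := by rw [e6]
          _ ≤ C0 * (ENNReal.ofReal lam⁻¹ * A 0 ^ (2:ℝ) + ENNReal.ofReal lam⁻¹ * A 1 ^ (2:ℝ) +
                ENNReal.ofReal lam * A 2 ^ (2:ℝ)) ^ ((1:ℝ)/2) := by
              refine hstep.trans_eq ?_
              congr 2
              ring
          _ = C0 * (ENNReal.ofReal lam⁻¹ * (A 0 ^ (2:ℝ) + A 1 ^ (2:ℝ)) +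
                ENNReal.ofReal lam * A 2 ^ (2:ℝ)) ^ ((1:ℝ)/2) := by
              congr 2
              ring
    _ = _ := by ring

lemma real_opt {h v : ℝ} (hh : 0 < h) (hv : 0 < v) :
    Real.sqrt (h/v) ^ ((1:ℝ)/6) *
      ((Real.sqrt (h/v))⁻¹ * h + Real.sqrt (h/v) * v) ^ ((1:ℝ)/2)
      = Real.sqrt 2 * (h ^ ((1:ℝ)/3) * v ^ ((1:ℝ)/6)) := by
  have hdv : 0 < h / v := by positivity
  set a := Real.log h with ha
  set b := Real.log v with hb
  have hexp_rpow : ∀ (c y : ℝ), Real.exp c ^ y = Real.exp (c * y) := fun c y => by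
    rw [Real.rpow_def_of_pos (Real.exp_pos c), Real.log_exp]
  have hL : Real.sqrt (h/v) = Real.exp ((a - b)/2) := by
    rw [Real.sqrt_eq_rpow, Real.rpow_def_of_pos hdv, Real.log_div hh.ne' hv.ne']
    ring_nf
    rfl
  have hLinv : (Real.sqrt (h/v))⁻¹ = Real.exp (-((a-b)/2)) := by rw [hL, Real.exp_neg]
  have hsum : (Real.sqrt (h/v))⁻¹ * h + Real.sqrt (h/v) * v = 2 * Real.exp ((a+b)/2) := by
    rw [hLinv, hL, show h = Real.exp a from (Real.exp_log hh).symm,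
      show v = Real.exp b from (Real.exp_log hv).symm, ← Real.exp_add, ← Real.exp_add,
      show -((a-b)/2) + a = (a+b)/2 by ring, show (a-b)/2 + b = (a+b)/2 by ring]
    ring
  rw [hsum, hL, hexp_rpow, Real.mul_rpow (by norm_num) (Real.exp_pos _).le, hexp_rpow,
    show h ^ ((1:ℝ)/3) = Real.exp (a * ((1:ℝ)/3)) from by rw [Real.rpow_def_of_pos hh],
    show v ^ ((1:ℝ)/6) = Real.exp (b * ((1:ℝ)/6)) from by rw [Real.rpow_def_of_pos hv],
    Real.sqrt_eq_rpow,
    show Real.exp ((a - b)/2 * ((1:ℝ)/6)) * ((2:ℝ) ^ ((1:ℝ)/2) * Real.exp ((a + b)/2 * ((1:ℝ)/2)))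
      = (2:ℝ) ^ ((1:ℝ)/2) * (Real.exp ((a - b)/2 * ((1:ℝ)/6)) * Real.exp ((a + b)/2 * ((1:ℝ)/2)))
      by ring,
    ← Real.exp_add, ← Real.exp_add,
    show (a - b)/2 * ((1:ℝ)/6) + (a + b)/2 * ((1:ℝ)/2) = a * ((1:ℝ)/3) + b * ((1:ℝ)/6) by ring]

theorem main :
    ∃ C : ℝ, 0 < C ∧ ∀ f : EuclideanSpace ℝ (Fin 3) → ℝ,
      ContDiff ℝ (⊤ : ℕ∞) f → HasCompactSupport f →
      eLpNorm f 6 volume ≤ ENNReal.ofReal C *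
        ((eLpNorm (pd 0 f) 2 volume ^ (2:ℝ) + eLpNorm (pd 1 f) 2 volume ^ (2:ℝ)) ^ (1/3 : ℝ)) *
        (eLpNorm (pd 2 f) 2 volume ^ (1/3 : ℝ)) := by
  set C0 := eLpNormLESNormFDerivOfEqInnerConst (volume : Measure E3) 2 with hC0
  refine ⟨((C0 : ℝ) + 1) * Real.sqrt 2, by positivity, fun f hf h2 => ?_⟩
  set A : Fin 3 → ℝ≥0∞ := fun i => eLpNorm (pd i f) 2 volume with hA
  -- degenerate cases
  have hzero : ∀ i : Fin 3, A i = 0 → eLpNorm f 6 volume = 0 := by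
    intro i hAi
    have h1 : pd i f =ᵐ[volume] 0 := by
      rw [← eLpNorm_eq_zero_iff (pd_continuous hf i).aestronglyMeasurable two_ne_zero]
      exact hAi
    have h2' : pd i f = 0 := ((pd_continuous hf i).ae_eq_iff_eq volume continuous_const).mp h1
    have h3 : f = 0 := eq_zero_of_pd_eq_zero hf h2 i fun x => congrFun h2' x
    rw [h3, eLpNorm_zero]
  by_cases hz0 : A 0 = 0
  · rw [hzero 0 hz0]; exact zero_le
  by_cases hz2 : A 2 = 0
  · rw [hzero 2 hz2]; exact zero_le
  -- main case
  set H : ℝ≥0∞ := A 0 ^ (2:ℝ) + A 1 ^ (2:ℝ) with hHdef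
  set V : ℝ≥0∞ := A 2 ^ (2:ℝ) with hVdef
  have hfin : ∀ i, A i ≠ ⊤ := pd_ne_top hf h2
  have hHtop : H ≠ ⊤ := by
    refine ENNReal.add_ne_top.mpr ⟨?_, ?_⟩ <;>
      exact ENNReal.rpow_ne_top_of_nonneg (by norm_num) (hfin _)
  have hVtop : V ≠ ⊤ := ENNReal.rpow_ne_top_of_nonneg (by norm_num) (hfin 2)
  have hHne : H ≠ 0 := by
    intro h0
    rw [hHdef, add_eq_zero] at h0
    exact hz0 ((ENNReal.rpow_eq_zero_iff_of_pos (by norm_num)).mp h0.1)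
  have hVne : V ≠ 0 := fun h0 => hz2 ((ENNReal.rpow_eq_zero_iff_of_pos (by norm_num)).mp h0)
  set h : ℝ := H.toReal with hhdef
  set v : ℝ := V.toReal with hvdef
  have hh : 0 < h := ENNReal.toReal_pos hHne hHtop
  have hv : 0 < v := ENNReal.toReal_pos hVne hVtop
  set lam : ℝ := Real.sqrt (h / v) with hlamdef
  have hlam : 0 < lam := Real.sqrt_pos.mpr (by positivity)
  have hsc := scaled hf h2 lam hlam
  have hHof : H = ENNReal.ofReal h := (ENNReal.ofReal_toReal hHtop).symm
  have hVof : V = ENNReal.ofReal v := (ENNReal.ofReal_toReal hVtop).symm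
  have hinner : ENNReal.ofReal lam⁻¹ * H + ENNReal.ofReal lam * V
      = ENNReal.ofReal (lam⁻¹ * h + lam * v) := by
    rw [hHof, hVof, ← ENNReal.ofReal_mul (by positivity), ← ENNReal.ofReal_mul hlam.le,
      ← ENNReal.ofReal_add (by positivity) (by positivity)]
  have hrhs : (C0 : ℝ≥0∞) * ENNReal.ofReal (lam ^ ((1:ℝ)/6)) *
        (ENNReal.ofReal lam⁻¹ * H + ENNReal.ofReal lam * V) ^ ((1:ℝ)/2)
      = (C0 : ℝ≥0∞) * ENNReal.ofReal (Real.sqrt 2) * (H ^ ((1:ℝ)/3) * A 2 ^ ((1:ℝ)/3)) := by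
    rw [hinner, ENNReal.ofReal_rpow_of_nonneg (by positivity) (by norm_num), mul_assoc,
      ← ENNReal.ofReal_mul (by positivity), real_opt hh hv,
      ENNReal.ofReal_mul (by positivity), ENNReal.ofReal_mul (by positivity), hHof,
      ← ENNReal.ofReal_rpow_of_nonneg hh.le (by norm_num)]
    have : ENNReal.ofReal (v ^ ((1:ℝ)/6)) = A 2 ^ ((1:ℝ)/3) := by
      rw [← ENNReal.ofReal_rpow_of_nonneg hv.le (by norm_num), ← hVof, hVdef,
        ← ENNReal.rpow_mul]
      norm_num
    rw [this]
    ring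
  have hmain : eLpNorm f 6 volume ≤
      (C0 : ℝ≥0∞) * ENNReal.ofReal (Real.sqrt 2) * (H ^ ((1:ℝ)/3) * A 2 ^ ((1:ℝ)/3)) := by
    rw [← hrhs]
    exact hsc
  refine hmain.trans ?_
  have hC : (C0 : ℝ≥0∞) * ENNReal.ofReal (Real.sqrt 2)
      ≤ ENNReal.ofReal (((C0 : ℝ) + 1) * Real.sqrt 2) := by
    rw [ENNReal.ofReal_mul (by positivity)]
    refine mul_le_mul_left ?_ _
    rw [← ENNReal.ofReal_coe_nnreal]
    exact ENNReal.ofReal_le_ofReal (by linarith)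
  calc (C0 : ℝ≥0∞) * ENNReal.ofReal (Real.sqrt 2) * (H ^ ((1:ℝ)/3) * A 2 ^ ((1:ℝ)/3))
      ≤ ENNReal.ofReal (((C0 : ℝ) + 1) * Real.sqrt 2) * (H ^ ((1:ℝ)/3) * A 2 ^ ((1:ℝ)/3)) :=
        mul_le_mul_left hC _
    _ = ENNReal.ofReal (((C0 : ℝ) + 1) * Real.sqrt 2) * H ^ (1/3:ℝ) * A 2 ^ (1/3:ℝ) := by ring

end AnisoAux

/-- Anisotropic Sobolev inequality on `ℝ³`: for all `f ∈ C_c^∞(ℝ³)`,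
`‖f‖_{L⁶} ≤ C ‖∇_h f‖_{L²}^{2/3} ‖∂₃ f‖_{L²}^{1/3}`, where
`‖∇_h f‖_{L²}² = ‖∂₁ f‖_{L²}² + ‖∂₂ f‖_{L²}²`. -/
theorem anisotropic_sobolev :
    ∃ C : ℝ, 0 < C ∧ ∀ f : EuclideanSpace ℝ (Fin 3) → ℝ,
      ContDiff ℝ (⊤ : ℕ∞) f → HasCompactSupport f →
      eLpNorm f 6 volume ≤ ENNReal.ofReal C *
        ((eLpNorm (pd 0 f) 2 volume ^ (2:ℝ) + eLpNorm (pd 1 f) 2 volume ^ (2:ℝ)) ^ (1/3 : ℝ)) *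
        (eLpNorm (pd 2 f) 2 volume ^ (1/3 : ℝ)) :=
  AnisoAux.main
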